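/- arXiv:1505.00762 — 7 statements merged into one kernel-verified Lean document; each statement's English description precedes it below -/
import Mathlib

section
/- Let L be a relational first-order language and M an L-structure. Then free amalgamation independence ⫫fa in M satisfies full transitivity: for all A ⊆ M and all D ⊆ C ⊆ B ⊆ M, A ⫫fa_D B holds if and only if A ⫫fa_C B and A ⫫fa_D C both hold. (Part of Proposition 3.2.) -/
open FirstOrder FirstOrder.Language FirstOrder.Language.Structure Set

namespace Paper

/-- Free amalgamation independence: `A ⫫fa_C B` in the `L`-structure `M`. -/
def IndepFA (L : FirstOrder.Language) {M : Type*} [L.Structure M] (A B C : Set M) : Prop :=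
  A ∩ B ⊆ C ∧
    ∀ (n : ℕ) (R : L.Relations n) (x : Fin n → M),
      RelMap R x → (∀ i, x i ∈ A ∪ B ∪ C) →
        (∀ i, x i ∈ A ∪ C) ∨ (∀ i, x i ∈ B ∪ C)

/-- Proposition 3.2 (part): `⫫fa` satisfies full transitivity. -/
theorem indepFA_full_transitivity
    (L : FirstOrder.Language) [L.IsRelational] (M : Type*) [L.Structure M] :
    ∀ A B C D : Set M, D ⊆ C → C ⊆ B →
      (IndepFA L A B D ↔ IndepFA L A B C ∧ IndepFA L A C D) := by
  intro A B C D hDC hCB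
  constructor
  · rintro ⟨hint, hrel⟩
    refine ⟨⟨hint.trans hDC, ?_⟩, ⟨?_, ?_⟩⟩
    · intro n R x hR hx
      rcases hrel n R x hR (fun i => by
        rcases hx i with (h | h) | h
        · exact Or.inl (Or.inl h)
        · exact Or.inl (Or.inr h)
        · exact Or.inl (Or.inr (hCB h))) with h | h
      · exact Or.inl fun i => (h i).imp id (fun h => hDC h)
      · exact Or.inr fun i => (h i).imp id (fun h => hDC h)
    · intro a ⟨ha, hc⟩
      exact hint ⟨ha, hCB hc⟩
    · intro n R x hR hx
      rcases hrel n R x hR (fun i => by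
        rcases hx i with (h | h) | h
        · exact Or.inl (Or.inl h)
        · exact Or.inl (Or.inr (hCB h))
        · exact Or.inr h) with h | h
      · exact Or.inl h
      · refine Or.inr fun i => ?_
        rcases hx i with (ha | hc) | hd
        · rcases h i with hb | hd
          · exact Or.inr (hint ⟨ha, hb⟩)
          · exact Or.inr hd
        · exact Or.inl hc
        · exact Or.inr hd
  · rintro ⟨⟨hint1, hrel1⟩, ⟨hint2, hrel2⟩⟩
    refine ⟨fun a ⟨ha, hb⟩ => hint2 ⟨ha, hint1 ⟨ha, hb⟩⟩, ?_⟩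
    intro n R x hR hx
    rcases hrel1 n R x hR (fun i => by
      rcases hx i with (h | h) | h
      · exact Or.inl (Or.inl h)
      · exact Or.inl (Or.inr h)
      · exact Or.inr (hDC h)) with h | h
    · rcases hrel2 n R x hR (fun i => by
        rcases h i with ha | hc
        · exact Or.inl (Or.inl ha)
        · exact Or.inl (Or.inr hc)) with h2 | h2
      · exact Or.inl h2
      · exact Or.inr fun i => (h2 i).imp (fun h => hCB h) id
    · refine Or.inr fun i => ?_
      rcases h i with hb | hc
      · exact Or.inl hb
      · exact Or.inl (hCB hc)
end Paper
end

section
/- Let L be a relational first-order language and M an L-structure. Then free amalgamation independence ⫫fa in M satisfies freedom: for all A, B, C, D ⊆ M, if A ⫫fa_C B and C ∩ (A ∪ B) ⊆ D ⊆ C, then A ⫫fa_D B. (Part of Proposition 3.2.) -/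
open FirstOrder FirstOrder.Language FirstOrder.Language.Structure Set

namespace Paper

/-- Proposition 3.2 (part): `⫫fa` satisfies freedom. -/
theorem indepFA_freedom
    (L : FirstOrder.Language) [L.IsRelational] (M : Type*) [L.Structure M] :
    ∀ A B C D : Set M, IndepFA L A B C → C ∩ (A ∪ B) ⊆ D → D ⊆ C →
      IndepFA L A B D := by
  rintro A B C D ⟨hAB, hR⟩ hCD hDC
  constructor
  · intro x hx
    exact hCD ⟨hAB hx, Or.inl hx.1⟩
  · intro n R x hRx hx
    have hx' : ∀ i, x i ∈ A ∪ B ∪ C := fun i => by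
      rcases hx i with (h | h) | h
      · exact Or.inl (Or.inl h)
      · exact Or.inl (Or.inr h)
      · exact Or.inr (hDC h)
    have key : ∀ i, x i ∈ C → x i ∈ D := fun i hiC => by
      rcases hx i with (h | h) | h
      · exact hCD ⟨hiC, Or.inl h⟩
      · exact hCD ⟨hiC, Or.inr h⟩
      · exact h
    rcases hR n R x hRx hx' with h | h
    · exact Or.inl fun i => (h i).imp id (key i)
    · exact Or.inr fun i => (h i).imp id (key i)

end Paper
end

section
/- Let L be a relational first-order language, M an L-structure, C ⊆ M, and let a, a', b be tuples in M with C ⊆ ran(a) ∩ ran(b), a ⫫fa_C b, and a' ⫫fa_C b. Suppose the map sending a to a' coordinatewise and fixing C pointwise is a well-defined isomorphism between the substructures of M induced on ran(a) ∪ C and on ran(a') ∪ C. Then the map sending a to a' coordinatewise and fixing ran(b) ∪ C pointwise is a well-defined isomorphism between the substructures of M induced on ran(a) ∪ ran(b) ∪ C and on ran(a') ∪ ran(b) ∪ C. (Implicit step in the proof of Proposition 3.3: from a' ≅_C a, a ⫫fa_C b and a' ⫫fa_C b it follows that ab ≅_C a'b.) -/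
open FirstOrder FirstOrder.Language FirstOrder.Language.Structure Set

namespace Paper

/-- `f` restricts to an isomorphism from the substructure of `M` induced on `S` to the
substructure of `M` induced on `T` (for relational `L`: a relation-preserving-and-reflecting
bijection from `S` onto `T`). -/
def IsInducedIso (L : FirstOrder.Language) {M : Type*} [L.Structure M]
    (f : M → M) (S T : Set M) : Prop :=
  Set.BijOn f S T ∧
    ∀ (n : ℕ) (R : L.Relations n) (x : Fin n → M), (∀ i, x i ∈ S) →
      (RelMap R x ↔ RelMap R (f ∘ x))

/-- Implicit step in the proof of Proposition 3.3: if `a' ≅_C a`, `a ⫫fa_C b`, and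
`a' ⫫fa_C b`, then `ab ≅_C a'b`. -/
theorem indepFA_stationarity_iso
    (L : FirstOrder.Language) [L.IsRelational] (M : Type*) [L.Structure M]
    {ι κ : Type*} (C : Set M) (a a' : ι → M) (b : κ → M)
    (hC : C ⊆ Set.range a ∩ Set.range b)
    (hab : IndepFA L (Set.range a) (Set.range b) C)
    (ha'b : IndepFA L (Set.range a') (Set.range b) C)
    (hiso : ∃ f : M → M, (∀ c ∈ C, f c = c) ∧ (∀ i, f (a i) = a' i) ∧
      IsInducedIso L f (Set.range a ∪ C) (Set.range a' ∪ C)) :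
    ∃ g : M → M, (∀ x ∈ Set.range b ∪ C, g x = x) ∧ (∀ i, g (a i) = a' i) ∧
      IsInducedIso L g (Set.range a ∪ Set.range b ∪ C)
        (Set.range a' ∪ Set.range b ∪ C) := by
  classical
  obtain ⟨f, hfC, hfa, ⟨hmap, hinj, hsurj⟩, hfrel⟩ := hiso
  have hCa : C ⊆ Set.range a := fun x hx => (hC hx).1
  have hCb : C ⊆ Set.range b := fun x hx => (hC hx).2
  have habC : Set.range a ∩ Set.range b ⊆ C := hab.1
  have ha'bC : Set.range a' ∩ Set.range b ⊆ C := ha'b.1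
  -- if f x lands in C, then x was already in C
  have hfix : ∀ x ∈ Set.range a ∪ C, f x ∈ C → x ∈ C := by
    intro x hx hfx
    have hxeq : x = f x := hinj hx (Or.inr hfx) (hfC _ hfx).symm
    rwa [hxeq]
  -- f moves points outside range b to points outside range b
  have hnb : ∀ x ∈ Set.range a, x ∉ Set.range b → f x ∉ Set.range b := by
    intro x hxa hxb hfb
    have hfT : f x ∈ Set.range a' ∪ C := hmap (Or.inl hxa)
    have hfC' : f x ∈ C := hfT.elim (fun h => ha'bC ⟨h, hfb⟩) id
    exact hxb (hCb (hfix x (Or.inl hxa) hfC'))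
  refine ⟨fun x => if x ∈ Set.range b then x else f x, ?_, ?_, ?_, ?_⟩
  · intro x hx
    rcases hx with hx | hx
    · exact if_pos hx
    · exact if_pos (hCb hx)
  · intro i
    by_cases h : a i ∈ Set.range b
    · have hc : a i ∈ C := habC ⟨⟨i, rfl⟩, h⟩
      have : a' i = a i := by rw [← hfa i, hfC _ hc]
      simp only []
      rw [if_pos h, this]
    · simp only []
      rw [if_neg h, hfa i]
  · -- BijOn
    have hSa : ∀ x, x ∈ Set.range a ∪ Set.range b ∪ C → x ∉ Set.range b →
        x ∈ Set.range a := by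
      intro x hx hxb
      rcases hx with (hx | hx) | hx
      · exact hx
      · exact absurd hx hxb
      · exact absurd (hCb hx) hxb
    refine ⟨?_, ?_, ?_⟩
    · intro x hx
      by_cases h : x ∈ Set.range b
      · simp only [if_pos h]
        exact Or.inl (Or.inr h)
      · simp only [if_neg h]
        have hfT : f x ∈ Set.range a' ∪ C := hmap (Or.inl (hSa x hx h))
        rcases hfT with h' | h'
        · exact Or.inl (Or.inl h')
        · exact Or.inr h'
    · intro x hx y hy heq
      by_cases hxb : x ∈ Set.range b <;> by_cases hyb : y ∈ Set.range b
      · simp only [] at heq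
        rwa [if_pos hxb, if_pos hyb] at heq
      · exfalso
        have hya : y ∈ Set.range a := hSa y hy hyb
        simp only [if_pos hxb, if_neg hyb] at heq
        exact hnb y hya hyb (heq ▸ hxb)
      · exfalso
        have hxa : x ∈ Set.range a := hSa x hx hxb
        simp only [if_neg hxb, if_pos hyb] at heq
        exact hnb x hxa hxb (heq ▸ hyb)
      · simp only [if_neg hxb, if_neg hyb] at heq
        exact hinj (Or.inl (hSa x hx hxb)) (Or.inl (hSa y hy hyb)) heq
    · intro y hy
      by_cases h : y ∈ Set.range b
      · exact ⟨y, Or.inl (Or.inr h), if_pos h⟩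
      · have hya' : y ∈ Set.range a' := by
          rcases hy with (hy | hy) | hy
          · exact hy
          · exact absurd hy h
          · exact absurd (hCb hy) h
        obtain ⟨x, hx, hfx⟩ := hsurj (Or.inl hya')
        have hxa : x ∈ Set.range a := hx.elim id (fun h' => hCa h')
        have hxb : x ∉ Set.range b := by
          intro hxb
          have : x ∈ C := habC ⟨hxa, hxb⟩
          rw [hfC _ this] at hfx
          exact h (hfx ▸ hxb)
        exact ⟨x, Or.inl (Or.inl hxa), by simp only [if_neg hxb]; exact hfx⟩
  · -- relations
    intro n R x hx
    constructor
    · intro hR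
      rcases hab.2 n R x hR hx with hall | hall
      · have heq : (fun z => if z ∈ Set.range b then z else f z) ∘ x = f ∘ x := by
          funext i
          simp only [Function.comp_apply]
          by_cases h : x i ∈ Set.range b
          · have hc : x i ∈ C := (hall i).elim (fun h' => habC ⟨h', h⟩) id
            rw [if_pos h, hfC _ hc]
          · rw [if_neg h]
        rw [heq]
        exact (hfrel n R x hall).mp hR
      · have heq : (fun z => if z ∈ Set.range b then z else f z) ∘ x = x := by
          funext i
          simp only [Function.comp_apply]
          have : x i ∈ Set.range b := (hall i).elim id (fun h' => hCb h')
          exact if_pos this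
        rw [heq]
        exact hR
    · intro hR
      have hmem : ∀ i, ((fun z => if z ∈ Set.range b then z else f z) ∘ x) i ∈
          Set.range a' ∪ Set.range b ∪ C := by
        intro i
        by_cases h : x i ∈ Set.range b
        · simp only [Function.comp_apply, if_pos h]
          exact Or.inl (Or.inr h)
        · simp only [Function.comp_apply, if_neg h]
          have hxa : x i ∈ Set.range a := by
            rcases hx i with (h' | h') | h'
            · exact h'
            · exact absurd h' h
            · exact absurd (hCb h') h
          rcases hmap (Or.inl hxa) with h' | h'
          · exact Or.inl (Or.inl h')
          · exact Or.inr h'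
      rcases ha'b.2 n R _ hR hmem with hall | hall
      · -- all images in range a' ∪ C : x lands in range a ∪ C and g = f there
        have key : ∀ i, x i ∈ Set.range a ∪ C ∧
            (if x i ∈ Set.range b then x i else f (x i)) = f (x i) := by
          intro i
          by_cases h : x i ∈ Set.range b
          · have hgi := hall i
            simp only [Function.comp_apply, if_pos h] at hgi
            have hc : x i ∈ C := hgi.elim (fun h' => ha'bC ⟨h', h⟩) id
            exact ⟨Or.inr hc, by rw [if_pos h, hfC _ hc]⟩
          · have hxa : x i ∈ Set.range a := by
              rcases hx i with (h' | h') | h'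
              · exact h'
              · exact absurd h' h
              · exact absurd (hCb h') h
            exact ⟨Or.inl hxa, if_neg h⟩
        have heq : (fun z => if z ∈ Set.range b then z else f z) ∘ x = f ∘ x := by
          funext i
          simp only [Function.comp_apply]
          exact (key i).2
        rw [heq] at hR
        exact (hfrel n R x (fun i => (key i).1)).mpr hR
      · -- all images in range b ∪ C : x lands in range b, so g fixes x
        have heq : (fun z => if z ∈ Set.range b then z else f z) ∘ x = x := by
          funext i
          simp only [Function.comp_apply]
          by_cases h : x i ∈ Set.range b
          · exact if_pos h
          · exfalso
            have hgi := hall i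
            simp only [Function.comp_apply, if_neg h] at hgi
            have hgb : f (x i) ∈ Set.range b := hgi.elim id (fun h' => hCb h')
            have hxa : x i ∈ Set.range a := by
              rcases hx i with (h' | h') | h'
              · exact h'
              · exact absurd h' h
              · exact absurd (hCb h') h
            exact hnb _ hxa h hgb
        rw [heq] at hR
        exact hR

end Paper
end

section
/- Let L be a relational first-order language and M an ultrahomogeneous L-structure. Let C ⊆ M be finite and let a, a', b be finite tuples in M with C ⊆ ran(a) ∩ ran(b), a ⫫fa_C b, a' ⫫fa_C b, and a' ≡_C a. Then there is an automorphism of M fixing ran(b) ∪ C pointwise and mapping a to a' coordinatewise; in particular ab ≡_C a'b. (Stationarity of ⫫fa in ultrahomogeneous relational structures; from the proof of Proposition 3.3.) -/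
open FirstOrder FirstOrder.Language FirstOrder.Language.Structure Set

namespace Paper

/-- `a ≡_C b`: some automorphism of `M` fixes `C` pointwise and maps `a` to `b`
coordinatewise. -/
def EqAt (L : FirstOrder.Language) {M : Type*} [L.Structure M] (C : Set M)
    {ι : Type*} (a b : ι → M) : Prop :=
  ∃ σ : M ≃[L] M, (∀ c ∈ C, σ c = c) ∧ ∀ i, σ (a i) = b i

/-- Stationarity of `⫫fa` in ultrahomogeneous relational structures (from the proof of
Proposition 3.3). -/
theorem indepFA_stationarity_ultrahomogeneous
    (L : FirstOrder.Language) [L.IsRelational] (M : Type*) [L.Structure M]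
    (hM : L.IsUltrahomogeneous M)
    {n m : ℕ} (C : Set M) (hCfin : C.Finite) (a a' : Fin n → M) (b : Fin m → M)
    (hC : C ⊆ Set.range a ∩ Set.range b)
    (hab : IndepFA L (Set.range a) (Set.range b) C)
    (ha'b : IndepFA L (Set.range a') (Set.range b) C)
    (heq : EqAt L C a' a) :
    (∃ σ : M ≃[L] M, (∀ x ∈ Set.range b ∪ C, σ x = x) ∧ ∀ i, σ (a i) = a' i) ∧
      EqAt L C (Sum.elim a b) (Sum.elim a' b) := by
  classical
  obtain ⟨σ, hσC, hσa⟩ := heq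
  have hCa : C ⊆ Set.range a := fun c hc => (hC hc).1
  have hCb : C ⊆ Set.range b := fun c hc => (hC hc).2
  have hσsC : ∀ c ∈ C, σ.symm c = c := by
    intro c hc
    have := hσC c hc
    conv_lhs => rw [← this]
    exact σ.symm_apply_apply c
  have hsa : ∀ i, σ.symm (a i) = a' i := by
    intro i
    rw [← hσa i]
    exact σ.symm_apply_apply _
  -- if a i ∈ C then a' i = a i
  have haC : ∀ i, a i ∈ C → a' i = a i := by
    intro i hi
    rw [← hsa i, hσsC _ hi]
  have haC' : ∀ i, a' i ∈ C → a' i = a i := by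
    intro i hi
    have := hσC _ hi
    rw [hσa i] at this
    exact this.symm
  have hCa' : C ⊆ Set.range a' := by
    intro c hc
    obtain ⟨i, rfl⟩ := hCa hc
    exact ⟨i, haC i hc⟩
  -- the map
  set g : M → M := fun x => if x ∈ Set.range b then x else σ.symm x with hg
  have gb : ∀ x ∈ Set.range b, g x = x := fun x hx => if_pos hx
  have gA : ∀ x ∈ Set.range a, g x = σ.symm x := by
    intro x hx
    by_cases hxb : x ∈ Set.range b
    · have hxC : x ∈ C := hab.1 ⟨hx, hxb⟩
      rw [gb x hxb, hσsC x hxC]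
    · exact if_neg hxb
  have ga : ∀ i, g (a i) = a' i := fun i => by rw [gA (a i) ⟨i, rfl⟩, hsa]
  have gA' : ∀ x ∈ Set.range a, g x ∈ Set.range a' := by
    rintro x ⟨i, rfl⟩; rw [ga]; exact ⟨i, rfl⟩
  -- key: for x in range a ∪ range b with g x ∈ range b, g x = x
  have keyb : ∀ x ∈ Set.range a ∪ Set.range b, g x ∈ Set.range b → g x = x := by
    rintro x (⟨j, rfl⟩ | hx) hgx
    · rw [ga] at hgx ⊢
      exact haC' j (ha'b.1 ⟨⟨j, rfl⟩, hgx⟩)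
    · exact gb x hx
  -- key: for x in range a ∪ range b with g x ∈ range a', σ (g x) = x
  have keya : ∀ x ∈ Set.range a ∪ Set.range b, g x ∈ Set.range a' → σ (g x) = x := by
    rintro x (hx | hx) hgx
    · rw [gA x hx]; exact σ.apply_symm_apply x
    · rw [gb x hx] at hgx ⊢
      exact hσC x (ha'b.1 ⟨hgx, hx⟩)
  -- injectivity on range a ∪ range b
  have ginj : ∀ x ∈ Set.range a ∪ Set.range b, ∀ y ∈ Set.range a ∪ Set.range b,
      g x = g y → x = y := by
    have h1 : ∀ x ∈ Set.range a, ∀ y ∈ Set.range b, g x = g y → x = y := by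
      intro x hx y hy hxy
      have : g x ∈ Set.range b := by rw [hxy, gb y hy]; exact hy
      have hgx := keyb x (Or.inl hx) this
      rw [hgx, gb y hy] at hxy
      exact hxy
    rintro x (hx | hx) y (hy | hy) hxy
    · rw [gA x hx, gA y hy] at hxy
      exact σ.symm.injective hxy
    · exact h1 x hx y hy hxy
    · exact (h1 y hy x hx hxy.symm).symm
    · rw [gb x hx, gb y hy] at hxy; exact hxy
  -- g maps range a ∪ range b into itself's image: relations preserved
  have grel : ∀ (k : ℕ) (R : L.Relations k) (x : Fin k → M),
      (∀ i, x i ∈ Set.range a ∪ Set.range b) →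
      (RelMap R (fun i => g (x i)) ↔ RelMap R x) := by
    intro k R x hx
    constructor
    · intro hR
      have hmem : ∀ i, g (x i) ∈ Set.range a' ∪ Set.range b ∪ C := by
        intro i
        rcases hx i with h | h
        · exact Or.inl (Or.inl (gA' _ h))
        · rw [gb _ h]; exact Or.inl (Or.inr h)
      rcases ha'b.2 k R _ hR hmem with h | h
      · have : ∀ i, σ (g (x i)) = x i := by
          intro i
          rcases h i with h' | h'
          · exact keya _ (hx i) h'
          · have h2 := keyb _ (hx i) (hCb h')
            rw [h2] at h' ⊢
            exact hσC _ h'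
        have hR' : RelMap R (fun i => σ (g (x i))) := by
          have := σ.map_rel R (fun i => g (x i))
          exact this.2 hR
        convert hR' using 2
        exact (this _).symm
      · have : ∀ i, g (x i) = x i := by
          intro i
          rcases h i with h' | h'
          · exact keyb _ (hx i) h'
          · exact keyb _ (hx i) (hCb h')
        convert hR using 2
        exact (this _).symm
    · intro hR
      have hmem : ∀ i, x i ∈ Set.range a ∪ Set.range b ∪ C := by
        intro i
        rcases hx i with h | h
        · exact Or.inl (Or.inl h)
        · exact Or.inl (Or.inr h)
      rcases hab.2 k R x hR hmem with h | h
      · have : ∀ i, g (x i) = σ.symm (x i) := by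
          intro i
          rcases h i with h' | h'
          · exact gA _ h'
          · exact gA _ (hCa h')
        have hR' : RelMap R (fun i => σ.symm (x i)) :=
          (σ.symm.map_rel R x).2 hR
        convert hR' using 2
        exact this _
      · have : ∀ i, g (x i) = x i := by
          intro i
          rcases h i with h' | h'
          · exact gb _ h'
          · exact gb _ (hCb h')
        convert hR using 2
        exact this _
  -- build the substructure and embedding
  set S : L.Substructure M := Substructure.closure L (Set.range a ∪ Set.range b) with hS
  have hSmem : ∀ x : M, x ∈ S ↔ x ∈ Set.range a ∪ Set.range b := by
    intro x
    rw [hS, Substructure.mem_closure_iff_of_isRelational]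
  have hSfg : S.FG := by
    rw [Substructure.fg_def]
    exact ⟨_, (Set.finite_range a).union (Set.finite_range b), rfl⟩
  let f : S ↪[L] M :=
    { toFun := fun x => g x.val
      inj' := fun x y hxy => Subtype.ext
        (ginj x.val ((hSmem x.val).1 x.2) y.val ((hSmem y.val).1 y.2) hxy)
      map_fun' := fun {k} F _ => isEmptyElim F
      map_rel' := fun {k} R x => by
        have := grel k R (fun i => (x i : M)) (fun i => (hSmem _).1 (x i).2)
        exact this }
  obtain ⟨τ, hτ⟩ := hM S hSfg f
  have hτeq : ∀ x : M, ∀ hx : x ∈ S, τ x = g x := by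
    intro x hx
    have := congrFun (congrArg (fun h => h.toFun) hτ) ⟨x, hx⟩
    exact this.symm
  have hfixb : ∀ x ∈ Set.range b ∪ C, τ x = x := by
    intro x hx
    have hxb : x ∈ Set.range b := by
      rcases hx with h | h
      · exact h
      · exact hCb h
    rw [hτeq x ((hSmem x).2 (Or.inr hxb)), gb x hxb]
  have hτa : ∀ i, τ (a i) = a' i := by
    intro i
    rw [hτeq (a i) ((hSmem (a i)).2 (Or.inl ⟨i, rfl⟩)), ga]
  refine ⟨⟨τ, hfixb, hτa⟩, ⟨τ, fun c hc => hfixb c (Or.inr hc), ?_⟩⟩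
  rintro (i | j)
  · exact hτa i
  · exact hfixb (b j) (Or.inl ⟨j, rfl⟩)

end Paper
end

section
/- Let L be a relational first-order language, let K be a Fraïssé class of finite L-structures that is closed under free amalgamation of L-structures, and let M be a Fraïssé limit of K (M is countable, ultrahomogeneous, and its age is K). Then ⫫fa satisfies full existence for finite sets in M: for all finite subsets B, C ⊆ M and every finite tuple a in M, there is a tuple a' with a' ≡_C a and a' ⫫fa_C B. (Full existence for ⫫fa; from the proof of Proposition 3.3 for Example 3.4(1).) -/
/-!
Let `P` be the substructure on `range a ∪ C` and `Q` the one on `B ∪ C`. Their free amalgam `D`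
over `C` is built from two pieces that embed in `M`, so it lies in `K` and embeds in `M`; by
ultrahomogeneity the embedding can be taken to be the identity on `Q`. Ultrahomogeneity again
extends the resulting embedding of `P` into `M` to an automorphism `σ` fixing `C`, and since
relations in `D` never cross between the two pieces, `σ ∘ a ⫫fa_C B`.
-/

open FirstOrder FirstOrder.Language FirstOrder.Language.Structure Set

namespace Paper

/-- The induced `L`-structure on a subset of `M` (for a relational language). -/
def inducedOn (L : FirstOrder.Language) [L.IsRelational] {M : Type*} [L.Structure M]
    (A : Set M) : L.Structure A where
  funMap := fun f _ => isEmptyElim f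
  RelMap := fun R x => RelMap R (fun i => (x i : M))

/-- `K` is closed under free amalgamation of `L`-structures: whenever a finite `L`-structure
`D` is covered by two subsets `A`, `B`, every relation of `D` holds entirely within `A` or
entirely within `B`, and the substructures induced on `A` and on `B` lie in `K`, then
`D ∈ K` (`D` is then the free amalgam of `A` and `B` over `A ∩ B`). -/
def ClosedUnderFreeAmalgamation (L : FirstOrder.Language) [L.IsRelational]
    (K : Set (CategoryTheory.Bundled.{w} L.Structure)) : Prop :=
  ∀ D : CategoryTheory.Bundled.{w} L.Structure, Finite D →
    ∀ A B : Set D, A ∪ B = Set.univ →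
      (∀ (n : ℕ) (R : L.Relations n) (x : Fin n → D),
        RelMap R x → (∀ i, x i ∈ A) ∨ (∀ i, x i ∈ B)) →
      (⟨A, inducedOn L A⟩ : CategoryTheory.Bundled L.Structure) ∈ K →
      (⟨B, inducedOn L B⟩ : CategoryTheory.Bundled L.Structure) ∈ K →
      D ∈ K

theorem _root_.FirstOrder.Language.IsUltrahomogeneous.exists_embedding_comp_eq_subtype
    {L : FirstOrder.Language} {M D : Type*} [L.Structure M] [L.Structure D]
    (h : L.IsUltrahomogeneous M) {S : L.Substructure M} (hS : S.FG) (j : S ↪[L] D)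
    (e : D ↪[L] M) : ∃ g : D ↪[L] M, g.comp j = S.subtype := by
  obtain ⟨σ, hσ⟩ := h S hS (e.comp j)
  refine ⟨σ.symm.toEmbedding.comp e, Embedding.ext fun s => ?_⟩
  simp [show e (j s) = σ s from DFunLike.congr_fun hσ s]

namespace IndepFA

variable {L : FirstOrder.Language} {M : Type*} [L.Structure M]

theorem mono {A A' B B' C : Set M} (h : IndepFA L A B C) (hA : A' ⊆ A) (hB : B' ⊆ B) :
    IndepFA L A' B' C := by
  obtain ⟨hABC, hrel⟩ := h
  refine ⟨fun m hm => hABC ⟨hA hm.1, hB hm.2⟩, fun n R x hx hmem => ?_⟩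
  have hmem' : ∀ i, x i ∈ A ∪ B ∪ C := fun i => by
    rcases hmem i with (h | h) | h
    exacts [Or.inl (Or.inl (hA h)), Or.inl (Or.inr (hB h)), Or.inr h]
  -- an element of `A' ∪ B'` on the wrong side lies in `A ∩ B ⊆ C`
  refine (hrel n R x hx hmem').imp (fun hAC i => ?_) (fun hBC i => ?_)
  · rcases hmem i with (h | h) | h
    · exact Or.inl h
    · exact Or.inr ((hAC i).elim (fun h' => hABC ⟨h', hB h⟩) id)
    · exact Or.inr h
  · rcases hmem i with (h | h) | h
    · exact Or.inr ((hBC i).elim (fun h' => hABC ⟨hA h, h'⟩) id)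
    · exact Or.inl h
    · exact Or.inr h

theorem image {D : Type*} [L.Structure D] (g : D ↪[L] M) {S T U : Set D}
    (h : IndepFA L S T U) : IndepFA L (g '' S) (g '' T) (g '' U) := by
  obtain ⟨hSTU, hrel⟩ := h
  refine ⟨?_, fun n R x hx hmem => ?_⟩
  · rw [← image_inter g.injective]
    exact image_mono hSTU
  · simp only [← image_union] at hmem ⊢
    choose y hy hgy using hmem
    obtain rfl : x = g ∘ y := funext fun i => (hgy i).symm
    exact (hrel n R y ((g.map_rel R y).1 hx) hy).imp
      (fun h i => mem_image_of_mem g (h i)) (fun h i => mem_image_of_mem g (h i))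

end IndepFA

/-- When `π` is injective on `S` and on `T`, this says that `D` is the free amalgam of the
structures induced on `S` and on `T` over `S ∩ T`. -/
def IsAmalgamAlong (L : FirstOrder.Language) {M D : Type*} [L.Structure M] [L.Structure D]
    (π : D → M) (S T : Set D) : Prop :=
  ∀ (n) (R : L.Relations n) (x : Fin n → D),
    RelMap R x ↔ ((∀ i, x i ∈ S) ∨ ∀ i, x i ∈ T) ∧ RelMap R (π ∘ x)

namespace IsAmalgamAlong

variable {L : FirstOrder.Language} {M D : Type*} [L.Structure M] [L.Structure D]
  {π : D → M} {S T : Set D}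

theorem relMap_iff (h : IsAmalgamAlong L π S T) {n} (R : L.Relations n) {x : Fin n → D}
    (hx : (∀ i, x i ∈ S) ∨ ∀ i, x i ∈ T) : RelMap R x ↔ RelMap R (π ∘ x) :=
  (h n R x).trans (and_iff_right hx)

theorem indepFA (h : IsAmalgamAlong L π S T) {U : Set D} (hU : S ∩ T ⊆ U) :
    IndepFA L S T U :=
  ⟨hU, fun _ R x hx _ =>
    ((h _ R x).1 hx).1.imp (fun hS i => Or.inl (hS i)) (fun hT i => Or.inl (hT i))⟩

def liftEmbedding [L.IsRelational] (h : IsAmalgamAlong L π S T) {N : Type*} [L.Structure N]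
    (e : N ↪[L] M) (f : N → D) (hf : π ∘ f = e) (hside : range f ⊆ S ∨ range f ⊆ T) :
    N ↪[L] D where
  toFun := f
  inj' := Function.Injective.of_comp (f := π) (hf ▸ e.injective)
  map_fun' F := isEmptyElim F
  map_rel' R x := by
    rw [h.relMap_iff R (x := f ∘ x) (hside.imp (fun hS i => hS (mem_range_self _))
      (fun hT i => hT (mem_range_self _))), ← Function.comp_assoc, hf]
    exact e.map_rel R x

theorem mem_age {M D : Type w} [L.Structure M] [L.Structure D] [L.IsRelational] {π : D → M}
    {S T : Set D} (h : IsAmalgamAlong L π S T) {U : Set D} (hfin : U.Finite)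
    (hU : U ⊆ S ∨ U ⊆ T) (hinj : InjOn π U) :
    (⟨U, inducedOn L U⟩ : CategoryTheory.Bundled.{w} L.Structure) ∈ L.age M := by
  let _ := inducedOn L U
  have := hfin.to_subtype
  refine ⟨Structure.FG.of_finite,
    ⟨⟨⟨fun u => π u, hinj.injective⟩, fun F => isEmptyElim F, fun R x => ?_⟩⟩⟩
  exact (h.relMap_iff R (x := fun i => (x i : D))
    (hU.imp (fun hS i => hS (x i).2) (fun hT i => hT (x i).2))).symm

end IsAmalgamAlong

section FreeAmalgam

variable {L : FirstOrder.Language} {M : Type w} [L.Structure M]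
  (P Q : L.Substructure M) {C : Set M} (hCQ : C ⊆ Q)

def amalgamProj : ↥((P : Set M) \ C) ⊕ Q → M :=
  Sum.elim Subtype.val Subtype.val

open scoped Classical in
/-- The copy of `P` in the amalgam meets the copy of `Q` exactly in the copy of `C`. -/
noncomputable def amalgamLeft : P → ↥((P : Set M) \ C) ⊕ Q := fun p =>
  if h : (p : M) ∈ C then Sum.inr ⟨p, hCQ h⟩ else Sum.inl ⟨p, p.2, h⟩

theorem amalgamLeft_of_mem {p : P} (h : (p : M) ∈ C) :
    amalgamLeft P Q hCQ p = Sum.inr ⟨p, hCQ h⟩ :=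
  dif_pos h

theorem amalgamProj_comp_amalgamLeft :
    amalgamProj P Q ∘ amalgamLeft P Q hCQ = ((↑) : P → M) := by
  funext p
  by_cases h : (p : M) ∈ C
  · simp [amalgamProj, amalgamLeft, h]
  · simp [amalgamProj, amalgamLeft, h]

theorem range_amalgamLeft_union_range_inr :
    range (amalgamLeft P Q hCQ) ∪ range Sum.inr = univ :=
  eq_univ_of_forall fun
    | Sum.inl p => Or.inl ⟨⟨p, p.2.1⟩, dif_neg p.2.2⟩
    | Sum.inr q => Or.inr ⟨q, rfl⟩

theorem range_amalgamLeft_inter_range_inr_subset :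
    range (amalgamLeft P Q hCQ) ∩ range Sum.inr ⊆ Sum.inr '' (((↑) : Q → M) ⁻¹' C) := by
  rintro _ ⟨⟨p, rfl⟩, q, hq⟩
  by_cases h : (p : M) ∈ C
  · rw [amalgamLeft_of_mem P Q hCQ h]
    exact mem_image_of_mem _ h
  · simp [amalgamLeft, h] at hq

variable [L.IsRelational]

def freeAmalgam : CategoryTheory.Bundled.{w} L.Structure where
  α := ↥((P : Set M) \ C) ⊕ Q
  str :=
    { funMap := fun F => isEmptyElim F
      RelMap := fun R x =>
        ((∀ i, x i ∈ range (amalgamLeft P Q hCQ)) ∨ ∀ i, x i ∈ range Sum.inr) ∧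
          RelMap R (amalgamProj P Q ∘ x) }

theorem isAmalgamAlong_freeAmalgam :
    IsAmalgamAlong L (D := freeAmalgam P Q hCQ) (amalgamProj P Q)
      (range (amalgamLeft P Q hCQ)) (range Sum.inr) :=
  fun _ _ _ => Iff.rfl

noncomputable def freeAmalgamLeft : P ↪[L] freeAmalgam P Q hCQ :=
  (isAmalgamAlong_freeAmalgam P Q hCQ).liftEmbedding P.subtype (amalgamLeft P Q hCQ)
    (amalgamProj_comp_amalgamLeft P Q hCQ) (Or.inl subset_rfl)

def freeAmalgamRight : Q ↪[L] freeAmalgam P Q hCQ :=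
  (isAmalgamAlong_freeAmalgam P Q hCQ).liftEmbedding Q.subtype Sum.inr rfl (Or.inr subset_rfl)

theorem freeAmalgam_mem_age (hfree : ClosedUnderFreeAmalgamation L (L.age M)) [Finite P]
    [Finite Q] : freeAmalgam P Q hCQ ∈ L.age M := by
  have h := isAmalgamAlong_freeAmalgam P Q hCQ
  have hleft : InjOn (amalgamProj P Q) (range (amalgamLeft P Q hCQ)) :=
    Function.Injective.injOn_range (by
      rw [amalgamProj_comp_amalgamLeft]
      exact Subtype.val_injective)
  have hright : InjOn (amalgamProj (C := C) P Q) (range Sum.inr) :=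
    Function.Injective.injOn_range (f := Sum.inr) Subtype.val_injective
  exact hfree _ (inferInstanceAs (Finite (↥((P : Set M) \ C) ⊕ Q))) _ _
    (range_amalgamLeft_union_range_inr P Q hCQ) (fun _ _ _ hx => hx.1)
    (h.mem_age (finite_range _) (Or.inl subset_rfl) hleft)
    (h.mem_age (finite_range _) (Or.inr subset_rfl) hright)

theorem indepFA_range_comp_amalgamLeft (g : freeAmalgam P Q hCQ ↪[L] M)
    (hg : g.comp (freeAmalgamRight P Q hCQ) = Q.subtype) :
    IndepFA L (range (g ∘ amalgamLeft P Q hCQ)) Q C := by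
  have hgQ (q : Q) : g (Sum.inr q) = q := DFunLike.congr_fun hg q
  have h := ((isAmalgamAlong_freeAmalgam P Q hCQ).indepFA
    (range_amalgamLeft_inter_range_inr_subset P Q hCQ)).image g
  convert h using 1
  · exact range_comp g _
  · ext m
    refine ⟨fun hm => ⟨Sum.inr ⟨m, hm⟩, mem_range_self _, hgQ ⟨m, hm⟩⟩, ?_⟩
    rintro ⟨_, ⟨q, rfl⟩, rfl⟩
    exact hgQ q ▸ q.2
  · ext m
    refine
      ⟨fun hm => ⟨Sum.inr ⟨m, hCQ hm⟩, mem_image_of_mem _ hm, hgQ ⟨m, hCQ hm⟩⟩, ?_⟩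
    rintro ⟨_, ⟨q, hq, rfl⟩, rfl⟩
    exact hgQ q ▸ hq

end FreeAmalgam

theorem indepFA_full_existence_fraisse_limit_general
    (L : FirstOrder.Language) [L.IsRelational] (M : Type w) [L.Structure M]
    (K : Set (CategoryTheory.Bundled.{w} L.Structure))
    (hfree : ClosedUnderFreeAmalgamation L K)
    (hhomog : L.IsUltrahomogeneous M) (hage : L.age M = K)
    (B C : Set M) (hB : B.Finite) (hC : C.Finite) {n : ℕ} (a : Fin n → M) :
    ∃ a' : Fin n → M, EqAt L C a a' ∧ IndepFA L (Set.range a') B C := by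
  subst hage
  set P := Substructure.closure L (range a ∪ C)
  set Q := Substructure.closure L (B ∪ C)
  have hP : P.FG := Substructure.fg_closure ((finite_range a).union hC)
  have hQ : Q.FG := Substructure.fg_closure (hB.union hC)
  have hCQ : C ⊆ Q := fun c hc => by simp [Q, hc]
  have := hP.finite
  have := hQ.finite
  obtain ⟨g, hg⟩ := hhomog.exists_embedding_comp_eq_subtype hQ (freeAmalgamRight P Q hCQ)
    (freeAmalgam_mem_age P Q hCQ hfree).2.some
  obtain ⟨σ, hσ⟩ := hhomog P hP (g.comp (freeAmalgamLeft P Q hCQ))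
  have hσP (p : P) : σ p = g (amalgamLeft P Q hCQ p) := (DFunLike.congr_fun hσ p).symm
  refine ⟨σ ∘ a, ⟨σ, fun c hc => ?_, fun _ => rfl⟩,
    (indepFA_range_comp_amalgamLeft P Q hCQ g hg).mono ?_ fun b hb => by simp [Q, hb]⟩
  · rw [hσP ⟨c, by simp [P, hc]⟩, amalgamLeft_of_mem P Q hCQ hc]
    exact DFunLike.congr_fun hg ⟨c, hCQ hc⟩
  · rintro _ ⟨i, rfl⟩
    exact ⟨⟨a i, by simp [P]⟩, (hσP _).symm⟩

/-- Full existence for `⫫fa` in a Fraïssé limit of a Fraïssé class of finite relational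
structures closed under free amalgamation (from the proof of Proposition 3.3, for
Example 3.4(1)). -/
theorem indepFA_full_existence_fraisse_limit
    (L : FirstOrder.Language) [L.IsRelational] (M : Type w) [L.Structure M] [Countable M]
    (K : Set (CategoryTheory.Bundled.{w} L.Structure))
    (hFr : IsFraisse K) (hKfin : ∀ N ∈ K, Finite N)
    (hfree : ClosedUnderFreeAmalgamation L K)
    (hhomog : L.IsUltrahomogeneous M) (hage : L.age M = K)
    (B C : Set M) (hB : B.Finite) (hC : C.Finite) {n : ℕ} (a : Fin n → M) :
    ∃ a' : Fin n → M, EqAt L C a a' ∧ IndepFA L (Set.range a') B C :=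
  indepFA_full_existence_fraisse_limit_general L M K hfree hhomog hage B C hB hC a

end Paper
end

section
/- Let M be a structure in which algebraic closure is disintegrated, i.e. acl(A) = ⋃_{a ∈ A} acl({a}) for every A ⊆ M. Then M is modular: algebraic independence ⫫a satisfies base monotonicity in M. (Proposition 6.5(d).) -/
open FirstOrder FirstOrder.Language Set

namespace Paper

/-- Model-theoretic algebraic closure of `A` in `M`. -/
def acl (L : FirstOrder.Language) {M : Type*} [L.Structure M] (A : Set M) : Set M :=
  {b | ∃ (k : ℕ) (φ : L.Formula (Fin (k + 1))) (p : Fin k → M),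
    (∀ i, p i ∈ A) ∧ φ.Realize (Fin.cons b p) ∧ {x : M | φ.Realize (Fin.cons x p)}.Finite}

/-- Algebraic independence: `A ⫫a_C B`. -/
def AInd (L : FirstOrder.Language) {M : Type*} [L.Structure M] (A B C : Set M) : Prop :=
  acl L (A ∪ C) ∩ acl L (B ∪ C) = acl L C

lemma acl_mono (L : FirstOrder.Language) {M : Type*} [L.Structure M] {A B : Set M}
    (h : A ⊆ B) : acl L A ⊆ acl L B := by
  rintro b ⟨k, φ, p, hp, h1, h2⟩
  exact ⟨k, φ, p, fun i => h (hp i), h1, h2⟩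

/-- Proposition 6.5(d): if algebraic closure in `M` is disintegrated, then `M` is modular,
i.e. algebraic independence satisfies base monotonicity. -/
theorem modular_of_disintegrated (L : FirstOrder.Language) (M : Type*) [L.Structure M]
    (hdis : ∀ A : Set M, acl L A = ⋃ a ∈ A, acl L {a}) :
    ∀ A B C D : Set M, D ⊆ C → C ⊆ B → AInd L A B D → AInd L A B C := by
  intro A B C D hDC hCB hind
  unfold AInd at *
  have hBC : B ∪ C = B := union_eq_self_of_subset_right hCB
  have hBD : B ∪ D = B := union_eq_self_of_subset_right (hDC.trans hCB)
  rw [hBC]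
  rw [hBD] at hind
  apply Subset.antisymm
  · rintro b ⟨hbA, hbB⟩
    rw [hdis (A ∪ C)] at hbA
    simp only [mem_iUnion] at hbA
    obtain ⟨a, ha, hba⟩ := hbA
    rcases ha with ha | ha
    · have : b ∈ acl L (A ∪ D) :=
        acl_mono L (by intro x hx; exact Or.inl (by simpa using hx ▸ ha : x ∈ A)) hba
      have hD : b ∈ acl L D := hind ▸ ⟨this, hbB⟩
      exact acl_mono L hDC hD
    · exact acl_mono L (by intro x hx; simp at hx; exact hx ▸ ha) hba
  · exact subset_inter (acl_mono L subset_union_right) (acl_mono L hCB)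

end Paper
end

section
/- Let L be a relational language, let K be a class of finite L-structures closed under isomorphism with K = K_{F⋆} for some class F⋆, and let F be the minimal forbidden class for K (the class of finite A ∉ K all of whose proper weak substructures are in K, so that K = K_F). Then K is closed under free amalgamation of L-structures if and only if every structure in F is 2-irreducible. (Claim of Section 7.1.) -/
open FirstOrder FirstOrder.Language FirstOrder.Language.Structure Set

namespace Paper

variable (L : FirstOrder.Language)

/-- A weak embedding: an injective map preserving every relation of `L`. -/
def IsWeakEmb {N P : Type*} [L.Structure N] [L.Structure P] (f : N → P) : Prop :=
  Function.Injective f ∧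
    ∀ (n : ℕ) (R : L.Relations n) (x : Fin n → N), RelMap R x → RelMap R (f ∘ x)

/-- `N` is a weak substructure of `P`. -/
def WeakSub (N P : CategoryTheory.Bundled.{w} L.Structure) : Prop :=
  ∃ f : N → P, IsWeakEmb L f

/-- `N` is a proper weak substructure of `P`. -/
def ProperWeakSub (N P : CategoryTheory.Bundled.{w} L.Structure) : Prop :=
  ∃ f : N → P, IsWeakEmb L f ∧ ¬Function.Surjective f

/-- `D` is `F`-free: no weak substructure of `D` belongs to `F`. -/
def FFree (F : Set (CategoryTheory.Bundled.{w} L.Structure))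
    (D : CategoryTheory.Bundled.{w} L.Structure) : Prop :=
  ∀ N ∈ F, ¬WeakSub L N D

/-- `K_F`: the class of finite `F`-free `L`-structures. -/
def KF (F : Set (CategoryTheory.Bundled.{w} L.Structure)) :
    Set (CategoryTheory.Bundled.{w} L.Structure) :=
  {D | Finite D ∧ FFree L F D}

/-- `F` is minimal: no structure in `F` has a proper weak substructure lying in `F`. -/
def MinimalClass (F : Set (CategoryTheory.Bundled.{w} L.Structure)) : Prop :=
  ∀ A ∈ F, ∀ N ∈ F, ¬ProperWeakSub L N A

end Paper

namespace Paper

/-- `A` is 2-irreducible: any two distinct elements of `A` are related in `A`. -/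
def TwoIrreducible (L : FirstOrder.Language) (A : Type*) [L.Structure A] : Prop :=
  ∀ a b : A, a ≠ b → ∃ (n : ℕ) (R : L.Relations n) (x : Fin n → A),
    RelMap R x ∧ (∃ i, x i = a) ∧ (∃ i, x i = b)

universe w

lemma weakSub_trans {L : FirstOrder.Language}
    {N P Q : CategoryTheory.Bundled.{w} L.Structure}
    (h1 : WeakSub L N P) (h2 : WeakSub L P Q) : WeakSub L N Q := by
  obtain ⟨f, hf1, hf2⟩ := h1
  obtain ⟨g, hg1, hg2⟩ := h2
  exact ⟨g ∘ f, hg1.comp hf1, fun n R x hx => hg2 n R (f ∘ x) (hf2 n R x hx)⟩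

lemma KF_closed_weakSub {L : FirstOrder.Language}
    (Fstar : Set (CategoryTheory.Bundled.{w} L.Structure))
    {N P : CategoryTheory.Bundled.{w} L.Structure}
    (hP : P ∈ KF L Fstar) (h : WeakSub L N P) : N ∈ KF L Fstar := by
  obtain ⟨f, hf⟩ := h
  have : Finite P := hP.1
  exact ⟨Finite.of_injective f hf.1,
    fun M hM hMN => hP.2 M hM (weakSub_trans hMN ⟨f, hf⟩)⟩

lemma exists_F_weakSub {L : FirstOrder.Language}
    (K F : Set (CategoryTheory.Bundled.{w} L.Structure))
    (hF : F = {A : CategoryTheory.Bundled.{w} L.Structure | Finite A ∧ A ∉ K ∧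
      ∀ N : CategoryTheory.Bundled.{w} L.Structure, ProperWeakSub L N A → N ∈ K}) :
    ∀ (m : ℕ) (D : CategoryTheory.Bundled.{w} L.Structure), Nat.card D = m →
      Finite D → D ∉ K → ∃ A ∈ F, WeakSub L A D := by
  intro m
  induction m using Nat.strong_induction_on with
  | _ m ih =>
    intro D hcard hfin hD
    by_cases h : ∀ N, ProperWeakSub L N D → N ∈ K
    · refine ⟨D, ?_, id, Function.injective_id, fun n R x hx => hx⟩
      rw [hF]; exact ⟨hfin, hD, h⟩
    · push_neg at h
      obtain ⟨N, ⟨f, hf, hfs⟩, hN⟩ := h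
      have hNfin : Finite N := Finite.of_injective f hf.1
      have hle : Nat.card N ≤ Nat.card D := Nat.card_le_card_of_injective f hf.1
      have hne : Nat.card N ≠ Nat.card D := fun hEq =>
        hfs (((Nat.bijective_iff_injective_and_card f).2 ⟨hf.1, hEq⟩).2)
      obtain ⟨A, hA, hsub⟩ := ih (Nat.card N) (hcard ▸ lt_of_le_of_ne hle hne)
        N rfl hNfin hN
      exact ⟨A, hA, weakSub_trans hsub ⟨f, hf⟩⟩

/-- Claim of Section 7.1: an isomorphism-closed class `K = K_{F⋆}` of finite relational
structures, with minimal forbidden class `F`, is closed under free amalgamation of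
`L`-structures iff every structure in `F` is 2-irreducible. -/
theorem closed_under_free_amalgamation_iff_two_irreducible
    (L : FirstOrder.Language) [L.IsRelational]
    (K Fstar F : Set (CategoryTheory.Bundled.{w} L.Structure))
    (hKiso : ∀ N P : CategoryTheory.Bundled.{w} L.Structure,
      N ∈ K → Nonempty (N ≃[L] P) → P ∈ K)
    (hK : K = KF L Fstar)
    (hF : F = {A : CategoryTheory.Bundled.{w} L.Structure | Finite A ∧ A ∉ K ∧
      ∀ N : CategoryTheory.Bundled.{w} L.Structure, ProperWeakSub L N A → N ∈ K}) :
    ClosedUnderFreeAmalgamation L K ↔ ∀ A ∈ F, TwoIrreducible L A := by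
  constructor
  · -- closed under free amalgamation → every structure in F is 2-irreducible
    intro hCl A hA
    rw [hF] at hA
    obtain ⟨hfin, hAK, hmin⟩ := hA
    intro a b hab
    by_contra hno
    push_neg at hno
    -- split A along {a}ᶜ and {b}ᶜ
    have hU : ({a}ᶜ : Set A) ∪ ({b}ᶜ : Set A) = Set.univ := by
      ext x
      simp only [Set.mem_union, Set.mem_compl_iff, Set.mem_singleton_iff, Set.mem_univ,
        iff_true]
      by_contra h
      push_neg at h
      exact hab (h.1 ▸ h.2 ▸ rfl)
    have hsplit : ∀ (n : ℕ) (R : L.Relations n) (x : Fin n → A),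
        RelMap R x → (∀ i, x i ∈ ({a}ᶜ : Set A)) ∨ (∀ i, x i ∈ ({b}ᶜ : Set A)) := by
      intro n R x hx
      by_contra h
      push_neg at h
      obtain ⟨⟨i, hi⟩, ⟨j, hj⟩⟩ := h
      simp only [Set.notMem_compl_iff, Set.mem_singleton_iff] at hi hj
      exact hno n R x hx ⟨i, hi⟩ j hj
    have hpws : ∀ c : A, ProperWeakSub L
        (⟨({c}ᶜ : Set A), inducedOn L ({c}ᶜ : Set A)⟩ :
          CategoryTheory.Bundled L.Structure) A := by
      intro c
      refine ⟨Subtype.val, ⟨Subtype.val_injective, fun n R x hx => hx⟩, fun hs => ?_⟩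
      obtain ⟨⟨y, hy⟩, hyc⟩ := hs c
      exact hy (by simpa using hyc)
    exact hAK (hCl A hfin _ _ hU hsplit (hmin _ (hpws a)) (hmin _ (hpws b)))
  · -- every structure in F is 2-irreducible → closed under free amalgamation
    intro h2 D hDfin A B hunion hrel hAK hBK
    by_contra hD
    obtain ⟨A0, hA0F, f, hf⟩ :=
      exists_F_weakSub K F hF (Nat.card D) D rfl hDfin hD
    have hA0K : A0 ∉ K := by rw [hF] at hA0F; exact hA0F.2.1
    have hrange : (∀ x, f x ∈ A) ∨ (∀ x, f x ∈ B) := by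
      by_contra hc
      push_neg at hc
      obtain ⟨⟨a, ha⟩, ⟨b, hb⟩⟩ := hc
      have hfa : f a ∈ B := by
        have : f a ∈ A ∪ B := hunion ▸ Set.mem_univ _
        exact this.resolve_left ha
      have hfb : f b ∈ A := by
        have : f b ∈ A ∪ B := hunion ▸ Set.mem_univ _
        exact this.resolve_right hb
      have hab : a ≠ b := fun h => ha (h ▸ hfb)
      obtain ⟨n, R, x, hx, ⟨i, hi⟩, ⟨j, hj⟩⟩ := h2 A0 hA0F a b hab
      rcases hrel n R (f ∘ x) (hf.2 n R x hx) with hall | hall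
      · exact ha (by have := hall i; rwa [Function.comp_apply, hi] at this)
      · exact hb (by have := hall j; rwa [Function.comp_apply, hj] at this)
    have key : ∀ (S : Set D), (∀ x, f x ∈ S) →
        (⟨S, inducedOn L S⟩ : CategoryTheory.Bundled L.Structure) ∈ K → False := by
      intro S hS hSK
      have hws : WeakSub L A0 (⟨S, inducedOn L S⟩ : CategoryTheory.Bundled L.Structure) :=
        ⟨fun x => ⟨f x, hS x⟩,
          fun x y h => hf.1 (congrArg Subtype.val h),
          fun n R x hx => hf.2 n R x hx⟩
      exact hA0K (hK ▸ KF_closed_weakSub Fstar (hK ▸ hSK) hws)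
    rcases hrange with hall | hall
    · exact key A hall hAK
    · exact key B hall hBK

end Paper
end
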